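/- There exists an injective map T : Z_3^4 → S_6 such that: (i) for every x ∈ Z_3^4, 2 ∈ {T(x)_1, T(x)_2, T(x)_3}; (ii) for every x, T(x)_6 ≠ 1; (iii) for every distinct x, y ∈ Z_3^4, the Hamming distance between T(x) and T(y) restricted to coordinates {1,2,3,4} is at least d_H(x, y). -/

import Mathlib

/-!
The witness is an explicit table of 81 permutations whose properties are checked exhaustively.
Injectivity needs no separate check: distinct words are at positive Hamming distance, so by the
distance property their images already differ somewhere among the first four positions.
-/

open Finset

theorem Function.injective_of_hammingDist_le_card_filter {ι κ α β : Type*} [Fintype ι]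
    [DecidableEq α] [Fintype κ] [DecidableEq β] (p : κ → Prop) [DecidablePred p]
    (F : (ι → α) → κ → β)
    (h : ∀ x y, hammingDist x y ≤ #{i | p i ∧ F x i ≠ F y i}) :
    Function.Injective F := by
  intro x y hxy
  simpa [hxy] using h x y

-- Positions and values are 0-based: the paper's `T(x)_j = k` is `code x (j - 1) = k - 1`.
def codeTable : List (List (Fin 6)) := [
  [0, 1, 2, 4, 3, 5],
  [0, 1, 3, 4, 2, 5],
  [0, 1, 5, 4, 2, 3],
  [1, 3, 2, 4, 0, 5],
  [1, 5, 3, 4, 0, 2],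
  [1, 2, 5, 4, 0, 3],
  [0, 3, 1, 4, 2, 5],
  [0, 5, 1, 4, 2, 3],
  [0, 2, 1, 4, 3, 5],
  [3, 1, 2, 4, 0, 5],
  [3, 1, 5, 2, 0, 4],
  [3, 1, 5, 4, 0, 2],
  [1, 0, 2, 4, 3, 5],
  [1, 0, 5, 2, 3, 4],
  [1, 0, 5, 4, 2, 3],
  [3, 0, 1, 4, 2, 5],
  [3, 5, 1, 4, 0, 2],
  [3, 2, 1, 4, 0, 5],
  [4, 1, 2, 3, 0, 5],
  [4, 1, 0, 2, 3, 5],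
  [2, 1, 0, 4, 3, 5],
  [1, 3, 0, 4, 2, 5],
  [1, 5, 0, 4, 2, 3],
  [1, 2, 0, 4, 3, 5],
  [4, 0, 1, 3, 2, 5],
  [4, 5, 1, 3, 0, 2],
  [4, 2, 1, 3, 0, 5],
  [5, 1, 2, 0, 3, 4],
  [0, 1, 3, 2, 4, 5],
  [2, 1, 3, 0, 4, 5],
  [1, 3, 2, 0, 4, 5],
  [1, 5, 3, 0, 2, 4],
  [1, 2, 3, 0, 4, 5],
  [5, 3, 1, 0, 2, 4],
  [0, 4, 1, 2, 3, 5],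
  [5, 2, 1, 0, 3, 4],
  [3, 1, 2, 0, 4, 5],
  [5, 1, 4, 2, 0, 3],
  [2, 1, 5, 0, 3, 4],
  [1, 4, 2, 0, 3, 5],
  [1, 5, 4, 0, 2, 3],
  [1, 4, 5, 0, 2, 3],
  [3, 4, 1, 0, 2, 5],
  [3, 4, 1, 2, 0, 5],
  [2, 4, 1, 0, 3, 5],
  [5, 1, 0, 3, 2, 4],
  [5, 1, 0, 2, 3, 4],
  [2, 1, 0, 3, 4, 5],
  [1, 4, 0, 3, 2, 5],
  [1, 4, 0, 2, 3, 5],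
  [1, 2, 0, 3, 4, 5],
  [5, 4, 1, 3, 0, 2],
  [4, 5, 1, 0, 2, 3],
  [5, 2, 1, 3, 0, 4],
  [0, 1, 2, 5, 3, 4],
  [0, 1, 3, 5, 2, 4],
  [2, 1, 3, 5, 0, 4],
  [1, 3, 2, 5, 0, 4],
  [1, 5, 3, 2, 0, 4],
  [1, 2, 3, 5, 0, 4],
  [0, 3, 1, 5, 2, 4],
  [0, 5, 1, 2, 3, 4],
  [0, 2, 1, 5, 3, 4],
  [3, 1, 2, 5, 0, 4],
  [3, 1, 4, 2, 0, 5],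
  [2, 1, 4, 5, 0, 3],
  [1, 0, 2, 5, 3, 4],
  [1, 5, 4, 2, 0, 3],
  [1, 2, 4, 5, 0, 3],
  [3, 0, 1, 5, 2, 4],
  [3, 5, 1, 2, 0, 4],
  [3, 2, 1, 5, 0, 4],
  [4, 1, 2, 5, 0, 3],
  [4, 1, 0, 5, 2, 3],
  [2, 1, 0, 5, 3, 4],
  [1, 3, 0, 5, 2, 4],
  [1, 5, 0, 2, 3, 4],
  [1, 2, 0, 5, 3, 4],
  [4, 3, 1, 5, 0, 2],
  [4, 5, 1, 2, 0, 3],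
  [4, 2, 1, 5, 0, 3]]

def codeIndex (x : Fin 4 → Fin 3) : ℕ := 27 * x 0 + 9 * x 1 + 3 * x 2 + x 3

def code (x : Fin 4 → Fin 3) (i : Fin 6) : Fin 6 :=
  (codeTable.getD (codeIndex x) []).getD i 0

theorem code_bijective : ∀ x, Function.Bijective (code x) := by decide

set_option maxRecDepth 10000 in
theorem code_one_mem_first_three : ∀ x, ∃ i : Fin 6, (i : ℕ) < 3 ∧ code x i = 1 := by decide

theorem code_last_ne_zero : ∀ x, code x 5 ≠ 0 := by decide

set_option maxRecDepth 10000 in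
theorem hammingDist_le_card_code_ne : ∀ x y : Fin 4 → Fin 3,
    hammingDist x y ≤ #{i : Fin 6 | (i : ℕ) < 4 ∧ code x i ≠ code y i} := by
  decide

theorem stmt_9 :
    ∃ T : (Fin 4 → Fin 3) → Equiv.Perm (Fin 6),
      Function.Injective T ∧
      (∀ x, ∃ i : Fin 6, (i : ℕ) < 3 ∧ ((T x i : Fin 6) : ℕ) + 1 = 2) ∧
      (∀ x, ((T x 5 : Fin 6) : ℕ) + 1 ≠ 1) ∧
      (∀ x y : Fin 4 → Fin 3, x ≠ y →
        hammingDist x y ≤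
          (Finset.univ.filter fun i : Fin 6 => (i : ℕ) < 4 ∧ T x i ≠ T y i).card) := by
  let T x : Equiv.Perm (Fin 6) := .ofBijective (code x) (code_bijective x)
  have hdist : ∀ x y, hammingDist x y ≤ #{i : Fin 6 | (i : ℕ) < 4 ∧ T x i ≠ T y i} :=
    hammingDist_le_card_code_ne
  refine ⟨T, ?_, fun x => ?_, fun x => ?_, fun x y _ => hdist x y⟩
  · exact .of_comp (f := DFunLike.coe) (Function.injective_of_hammingDist_le_card_filter _ _ hdist)
  · obtain ⟨i, hi, hi1⟩ := code_one_mem_first_three x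
    exact ⟨i, hi, congrArg (· + 1) (congrArg Fin.val hi1)⟩
  · exact fun h => code_last_ne_zero x (Fin.ext (Nat.succ_injective h))
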